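/- Let k₁ < n₁, let U₁ ∈ St(n₁, k₁) and U₁^⊥ ∈ St(n₁, n₁−k₁) satisfy U₁ᵀU₁^⊥ = 0, let U₂ ∈ St(n₂, k₂), U₃ ∈ St(n₃, k₃), and let S ∈ ℝ^{k₁×k₂×k₃}. Consider the linear map Φ : ℝ^{(n₁−k₁)×k₁} → ℝ^{n₁×n₂×n₃} defined by Φ(V) = (U₁^⊥V ⊗ U₂ ⊗ U₃)·S, with Frobenius inner products on domain and codomain. Then the multiset of singular values of Φ consists of the singular values of the mode-1 flattening S₍₁₎, each repeated with multiplicity n₁ − k₁. -/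
import Mathlib


open Matrix

/-- The Frobenius inner product of two real matrices. -/
def finner {α β : Type*} [Fintype α] [Fintype β] (A B : Matrix α β ℝ) : ℝ :=
  ∑ i, ∑ j, A i j * B i j

/-- The Frobenius inner product of two third-order tensors. -/
def tinner {a b c : ℕ} (S T : Fin a → Fin b → Fin c → ℝ) : ℝ :=
  ∑ i, ∑ j, ∑ l, S i j l * T i j l

/-- The multilinear (Tucker) action `(A ⊗ B ⊗ C)·S` of three matrices on a tensor. -/
def tact {n₁ n₂ n₃ k₁ k₂ k₃ : ℕ} (A : Matrix (Fin n₁) (Fin k₁) ℝ)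
    (B : Matrix (Fin n₂) (Fin k₂) ℝ) (C : Matrix (Fin n₃) (Fin k₃) ℝ)
    (S : Fin k₁ → Fin k₂ → Fin k₃ → ℝ) : Fin n₁ → Fin n₂ → Fin n₃ → ℝ :=
  fun a b c => ∑ i, ∑ j, ∑ l, A a i * B b j * C c l * S i j l

/-- The mode-1 flattening of a third-order tensor. -/
def flat1 {k₁ k₂ k₃ : ℕ} (S : Fin k₁ → Fin k₂ → Fin k₃ → ℝ) :
    Matrix (Fin k₁) (Fin k₂ × Fin k₃) ℝ := Matrix.of fun a p => S a p.1 p.2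

section Aux

lemma finner_trace {α β : Type*} [Fintype α] [Fintype β] (A B : Matrix α β ℝ) :
    finner A B = Matrix.trace (A * Bᵀ) := by
  simp [finner, Matrix.trace, Matrix.mul_apply, Matrix.diag]

lemma tinner_trace {a b c : ℕ} (S T : Fin a → Fin b → Fin c → ℝ) :
    tinner S T = Matrix.trace (flat1 S * (flat1 T)ᵀ) := by
  simp [tinner, flat1, Matrix.trace, Matrix.mul_apply, Matrix.diag, Fintype.sum_prod_type]

open Kronecker in
lemma flat1_tact {n₁ n₂ n₃ k₁ k₂ k₃ : ℕ} (A : Matrix (Fin n₁) (Fin k₁) ℝ)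
    (B : Matrix (Fin n₂) (Fin k₂) ℝ) (C : Matrix (Fin n₃) (Fin k₃) ℝ)
    (S : Fin k₁ → Fin k₂ → Fin k₃ → ℝ) :
    flat1 (tact A B C S) = A * flat1 S * (B ⊗ₖ C)ᵀ := by
  ext a bc
  obtain ⟨b, c⟩ := bc
  simp only [flat1, tact, Matrix.of_apply, Matrix.mul_apply, Matrix.transpose_apply,
    Matrix.kroneckerMap_apply, Fintype.sum_prod_type, Finset.sum_mul, Finset.mul_sum]
  rw [Finset.sum_comm]
  refine Finset.sum_congr rfl fun j _ => ?_
  rw [Finset.sum_comm]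
  exact Finset.sum_congr rfl fun l _ => Finset.sum_congr rfl fun i _ => by ring

lemma finner_left_ext {α β : Type*} [Fintype α] [Fintype β] [DecidableEq α] [DecidableEq β]
    {A B : Matrix α β ℝ} (h : ∀ V, finner V A = finner V B) : A = B := by
  ext r i
  have := h (Matrix.single r i 1)
  simpa [finner, Matrix.single, ite_and, Finset.sum_ite_eq] using this

lemma rank_right_mul_eigen {m k : ℕ} (G : Matrix (Fin k) (Fin k) ℝ) (hG : Gᵀ = G)
    (L : Module.End ℝ (Matrix (Fin m) (Fin k) ℝ)) (hL : ∀ W, L W = W * G) (t : ℝ) :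
    Module.finrank ℝ (Module.End.eigenspace L t) =
      m * Module.finrank ℝ (Module.End.eigenspace (Matrix.toLin' G) t) := by
  have hrow : ∀ (W : Matrix (Fin m) (Fin k) ℝ) (r : Fin m),
      Matrix.toLin' G (W r) = (W * G) r := by
    intro W r
    funext i
    simp only [Matrix.toLin'_apply, Matrix.mulVec, Matrix.mul_apply, dotProduct]
    refine Finset.sum_congr rfl fun x _ => ?_
    have hx : G i x = G x i := congrFun (congrFun hG x) i
    rw [hx]; ring
  have hmem : ∀ (W : Matrix (Fin m) (Fin k) ℝ),
      W ∈ Module.End.eigenspace L t ↔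
        ∀ r, W r ∈ Module.End.eigenspace (Matrix.toLin' G) t := by
    intro W
    rw [Module.End.mem_eigenspace_iff, hL]
    constructor
    · intro h r
      rw [Module.End.mem_eigenspace_iff, hrow, h]
      rfl
    · intro h
      funext r i
      have := h r
      rw [Module.End.mem_eigenspace_iff, hrow] at this
      exact congrFun this i
  let e : Module.End.eigenspace L t ≃ₗ[ℝ]
      (Fin m → Module.End.eigenspace (Matrix.toLin' G) t) :=
    { toFun := fun W r => ⟨(W : Matrix (Fin m) (Fin k) ℝ) r, (hmem _).mp W.2 r⟩
      invFun := fun f => ⟨fun r => (f r : Fin k → ℝ), (hmem _).mpr fun r => (f r).2⟩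
      map_add' := fun W W' => rfl
      map_smul' := fun c W => rfl
      left_inv := fun W => rfl
      right_inv := fun f => rfl }
  rw [e.finrank_eq, Module.finrank_pi_fintype, Finset.sum_const, Finset.card_fin,
    smul_eq_mul]

end Aux

/-- The singular values of `Φ(V) = (U₁^⊥V ⊗ U₂ ⊗ U₃)·S` are the singular
values of the mode-1 flattening `S₍₁₎`, each repeated with multiplicity `n₁ − k₁`.
Equivalently, for every `t`, the multiplicity of `t` as an eigenvalue of `Φ* ∘ Φ` is
`n₁ − k₁` times its multiplicity as an eigenvalue of `S₍₁₎S₍₁₎ᵀ`. -/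
theorem stmt16 {n₁ n₂ n₃ k₁ k₂ k₃ : ℕ} (hk₁ : k₁ < n₁)
    (U₁ : Matrix (Fin n₁) (Fin k₁) ℝ) (U₁p : Matrix (Fin n₁) (Fin (n₁ - k₁)) ℝ)
    (U₂ : Matrix (Fin n₂) (Fin k₂) ℝ) (U₃ : Matrix (Fin n₃) (Fin k₃) ℝ)
    (hU₁ : U₁ᵀ * U₁ = 1) (hU₁p : U₁pᵀ * U₁p = 1) (hperp : U₁ᵀ * U₁p = 0)
    (hU₂ : U₂ᵀ * U₂ = 1) (hU₃ : U₃ᵀ * U₃ = 1)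
    (S : Fin k₁ → Fin k₂ → Fin k₃ → ℝ)
    (Φ : Matrix (Fin (n₁ - k₁)) (Fin k₁) ℝ →ₗ[ℝ] (Fin n₁ → Fin n₂ → Fin n₃ → ℝ))
    (hΦ : ∀ V, Φ V = tact (U₁p * V) U₂ U₃ S)
    -- `Φstar` is the adjoint of `Φ` w.r.t. the Frobenius inner products:
    (Φstar : (Fin n₁ → Fin n₂ → Fin n₃ → ℝ) →ₗ[ℝ] Matrix (Fin (n₁ - k₁)) (Fin k₁) ℝ)
    (hΦstar : ∀ V X, tinner (Φ V) X = finner V (Φstar X)) :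
    ∀ t : ℝ,
      Module.finrank ℝ (Module.End.eigenspace (Φstar ∘ₗ Φ) t) =
        (n₁ - k₁) * Module.finrank ℝ
          (Module.End.eigenspace (Matrix.toLin' (flat1 S * (flat1 S)ᵀ)) t) := by
  open Kronecker in
  intro t
  have hG : (flat1 S * (flat1 S)ᵀ)ᵀ = flat1 S * (flat1 S)ᵀ := by
    simp [Matrix.transpose_mul]
  have hP : (U₂ ⊗ₖ U₃)ᵀ * (U₂ ⊗ₖ U₃) = (1 : Matrix (Fin k₂ × Fin k₃) (Fin k₂ × Fin k₃) ℝ) := by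
    rw [← Matrix.kroneckerMap_transpose, ← Matrix.mul_kronecker_mul, hU₂, hU₃,
      Matrix.one_kronecker_one]
  have key : ∀ V W, finner V (Φstar (Φ W)) = finner V (W * (flat1 S * (flat1 S)ᵀ)) := by
    intro V W
    rw [← hΦstar, hΦ, hΦ, tinner_trace, flat1_tact, flat1_tact, finner_trace]
    have hmain : ((U₁p * V) * flat1 S * (U₂ ⊗ₖ U₃)ᵀ) * (((U₁p * W) * flat1 S * (U₂ ⊗ₖ U₃)ᵀ)ᵀ)
        = U₁p * (V * (flat1 S * ((flat1 S)ᵀ * (Wᵀ * U₁pᵀ)))) := by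
      simp only [Matrix.transpose_mul, Matrix.transpose_transpose, Matrix.mul_assoc]
      rw [← Matrix.mul_assoc ((U₂ ⊗ₖ U₃)ᵀ) (U₂ ⊗ₖ U₃), hP, Matrix.one_mul]
    rw [hmain, Matrix.trace_mul_comm]
    simp only [Matrix.transpose_mul, Matrix.transpose_transpose, Matrix.mul_assoc]
    rw [hU₁p, Matrix.mul_one]
  have hconj : ∀ W, Φstar (Φ W) = W * (flat1 S * (flat1 S)ᵀ) :=
    fun W => finner_left_ext (fun V => key V W)
  let L : Module.End ℝ (Matrix (Fin (n₁ - k₁)) (Fin k₁) ℝ) :=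
    { toFun := fun W => W * (flat1 S * (flat1 S)ᵀ)
      map_add' := fun a b => Matrix.add_mul a b _
      map_smul' := fun c a => Matrix.smul_mul c a _ }
  have hend : Φstar ∘ₗ Φ = L := LinearMap.ext fun W => hconj W
  rw [hend]
  exact rank_right_mul_eigen _ hG L (fun W => rfl) t
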